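/- arXiv:1601.05251 — 5 statements merged into one kernel-verified Lean document; each statement's English description precedes it below -/
import Mathlib

section
/- Let p be a prime with p > 5, let η̃ ∈ SL(2,p) with trace t, and let η be its image in PSL(2,p). Then η has order 5 if and only if (t² − 1)² = t² in F_p. -/
open Matrix

theorem sq_eq' {R : Type*} [CommRing R] (M : Matrix (Fin 2) (Fin 2) R) (hd : M.det = 1) :
    M * M = M.trace • M - 1 := by
  rw [Matrix.det_fin_two] at hd
  ext i j
  fin_cases i <;> fin_cases j <;>
    simp [Matrix.mul_apply, Fin.sum_univ_succ, Matrix.trace_fin_two, Matrix.one_apply] <;>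
    first | ring1 | linear_combination -hd

theorem step' {R : Type*} [CommRing R] (M : Matrix (Fin 2) (Fin 2) R) (hd : M.det = 1)
    (a b : R) : M * (a • M - b • 1) = (a * M.trace - b) • M - a • 1 := by
  rw [mul_sub, mul_smul_comm, mul_smul_comm, sq_eq' M hd, mul_one, smul_sub, smul_smul,
    sub_smul]
  module

theorem pow5_eq' {R : Type*} [CommRing R] (M : Matrix (Fin 2) (Fin 2) R) (hd : M.det = 1) :
    M ^ 5 = (M.trace ^ 4 - 3 * M.trace ^ 2 + 1) • M - (M.trace ^ 3 - 2 * M.trace) • 1 := by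
  have h2 : M ^ 2 = M.trace • M - (1 : R) • 1 := by
    rw [pow_two, sq_eq' M hd, one_smul]
  have h3 : M ^ 3 = (M.trace * M.trace - 1) • M - M.trace • 1 := by
    rw [pow_succ', h2, step' M hd]
  have h4 : M ^ 4 = ((M.trace * M.trace - 1) * M.trace - M.trace) • M -
      (M.trace * M.trace - 1) • 1 := by
    rw [show (4:ℕ) = 3 + 1 from rfl, pow_succ', h3, step' M hd]
  have h5 : M ^ 5 = (((M.trace * M.trace - 1) * M.trace - M.trace) * M.trace -
      (M.trace * M.trace - 1)) • M - ((M.trace * M.trace - 1) * M.trace - M.trace) • 1 := by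
    rw [show (5:ℕ) = 4 + 1 from rfl, pow_succ', h4, step' M hd]
  rw [h5]
  module

/-- Let `p > 5` be prime, `η̃ ∈ SL(2,p)` with trace `t`, and let `η` be its image in
`PSL(2,p) = SL(2,p)/center`.  Then `η` has order 5 iff `(t² − 1)² = t²`. -/
theorem psl_order_five_iff (p : ℕ) [Fact p.Prime] (hp : 5 < p)
    (η' : Matrix.SpecialLinearGroup (Fin 2) (ZMod p)) :
    orderOf (QuotientGroup.mk η' :
        Matrix.SpecialLinearGroup (Fin 2) (ZMod p) ⧸
          Subgroup.center (Matrix.SpecialLinearGroup (Fin 2) (ZMod p))) = 5 ↔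
      (Matrix.trace (η' : Matrix (Fin 2) (Fin 2) (ZMod p)) ^ 2 - 1) ^ 2 =
        Matrix.trace (η' : Matrix (Fin 2) (Fin 2) (ZMod p)) ^ 2 := by
  haveI : Fact (Nat.Prime 5) := ⟨by norm_num⟩
  set M : Matrix (Fin 2) (Fin 2) (ZMod p) := (η' : Matrix (Fin 2) (Fin 2) (ZMod p)) with hM
  set t : ZMod p := M.trace with ht
  have hdet : M.det = 1 := η'.property
  have h5ne : (5 : ZMod p) ≠ 0 := by
    intro h
    have : ((5 : ℕ) : ZMod p) = 0 := by exact_mod_cast h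
    rw [ZMod.natCast_eq_zero_iff] at this
    have := Nat.le_of_dvd (by norm_num) this
    omega
  have hscal : ∀ r : ZMod p, (Matrix.scalar (Fin 2)) r = r • (1 : Matrix (Fin 2) (Fin 2) (ZMod p)) := by
    intro r
    rw [Matrix.scalar_apply, Matrix.smul_one_eq_diagonal]
  have hpow : ((η' ^ 5 : Matrix.SpecialLinearGroup (Fin 2) (ZMod p)) :
      Matrix (Fin 2) (Fin 2) (ZMod p)) = M ^ 5 := by
    simp [hM]
  constructor
  · intro h
    have hxne : (QuotientGroup.mk η' : _ ⧸ Subgroup.center _) ≠ 1 := by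
      intro e
      rw [e, orderOf_one] at h
      norm_num at h
    have hx5 : (QuotientGroup.mk η' : _ ⧸ Subgroup.center _) ^ 5 = 1 := by
      rw [← h]; exact pow_orderOf_eq_one _
    have hmem : η' ^ 5 ∈ Subgroup.center (Matrix.SpecialLinearGroup (Fin 2) (ZMod p)) := by
      rw [← QuotientGroup.eq_one_iff]
      exact hx5
    obtain ⟨r, hr2, hrs⟩ := Matrix.SpecialLinearGroup.mem_center_iff.mp hmem
    rw [hscal, hpow, pow5_eq' M hdet, ← ht] at hrs
    -- hrs : r • 1 = f5 • M - f4 • 1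
    have key : (t ^ 4 - 3 * t ^ 2 + 1) • M = (t ^ 3 - 2 * t + r) • (1 : Matrix (Fin 2) (Fin 2) (ZMod p)) := by
      linear_combination (norm := module) -hrs
    have hf5 : t ^ 4 - 3 * t ^ 2 + 1 = 0 := by
      by_contra h0
      -- M is scalar
      have hMc : M = ((t ^ 4 - 3 * t ^ 2 + 1)⁻¹ * (t ^ 3 - 2 * t + r)) •
          (1 : Matrix (Fin 2) (Fin 2) (ZMod p)) := by
        rw [mul_smul, ← key, smul_smul, inv_mul_cancel₀ h0, one_smul]
      set c := (t ^ 4 - 3 * t ^ 2 + 1)⁻¹ * (t ^ 3 - 2 * t + r) with hc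
      have hc2 : c ^ 2 = 1 := by
        have := hdet
        rw [hMc, Matrix.det_smul, Matrix.det_one, mul_one] at this
        simpa [Fintype.card_fin] using this
      have : η' ∈ Subgroup.center (Matrix.SpecialLinearGroup (Fin 2) (ZMod p)) := by
        refine Matrix.SpecialLinearGroup.mem_center_iff.mpr ⟨c, by simpa using hc2, ?_⟩
        rw [hscal, ← hMc]
      exact hxne ((QuotientGroup.eq_one_iff _).mpr this)
    linear_combination hf5
  · intro h
    have hf5 : t ^ 4 - 3 * t ^ 2 + 1 = 0 := by linear_combination h
    have hf4 : (t ^ 3 - 2 * t) ^ 2 = 1 := by linear_combination (t ^ 2 - 1) * hf5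
    have hM5 : M ^ 5 = (-(t ^ 3 - 2 * t)) • (1 : Matrix (Fin 2) (Fin 2) (ZMod p)) := by
      rw [pow5_eq' M hdet, ← ht, hf5]
      module
    have hmem : η' ^ 5 ∈ Subgroup.center (Matrix.SpecialLinearGroup (Fin 2) (ZMod p)) := by
      refine Matrix.SpecialLinearGroup.mem_center_iff.mpr ⟨-(t ^ 3 - 2 * t), ?_, ?_⟩
      · rw [Fintype.card_fin, neg_sq]; exact hf4
      · rw [hscal, hpow, hM5]
    have hx5 : (QuotientGroup.mk η' : _ ⧸ Subgroup.center _) ^ 5 = 1 :=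
      (QuotientGroup.eq_one_iff _).mpr hmem
    have hxne : (QuotientGroup.mk η' : _ ⧸ Subgroup.center _) ≠ 1 := by
      intro e
      have hmem' := (QuotientGroup.eq_one_iff _).mp e
      obtain ⟨r, hr2, hrs⟩ := Matrix.SpecialLinearGroup.mem_center_iff.mp hmem'
      rw [hscal] at hrs
      have htr : t = 2 * r := by
        rw [ht, hM, ← hrs, Matrix.trace_smul, Matrix.trace_one]
        simp [Fintype.card_fin]
        ring
      rw [Fintype.card_fin] at hr2
      have : (5 : ZMod p) = 0 := by
        have h9 : ((2 * r) ^ 2 - 1) ^ 2 = (2 * r) ^ 2 := by rw [← htr]; exact h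
        linear_combination h9 - (16 * r ^ 2 + 4) * hr2
      exact h5ne this
    exact orderOf_eq_prime hx5 hxne
end

section
/- Any nontrivial group generated by two elements μ, η with μ² = 1, η³ = 1, and (μη)⁵ = 1 is isomorphic to the alternating group A₅. -/
/-!
Put `a = μ` and `c = μη`; then `a² = c⁵ = (ac)³ = 1` and `a, c` generate `G`. Twelve explicit
left cosets of `⟨c⟩` (the vertices of an icosahedron, `c` rotating about one of them) are
permuted by `a` and `c`, as a handful of identities derived from the relations shows; so they
are all of `G ⧸ ⟨c⟩`, and `|G| ≤ 12 · 5`. The von Dyck group `⟨x, y | x², y³, (xy)⁵⟩` maps onto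
`A₅`, since the image contains elements of order 2, 3 and 5 and so has index at most 2 in a
simple group; by the bound this map is an isomorphism. Finally `G` is a nontrivial quotient of
the simple group `A₅`.
-/

open Pointwise Subgroup

theorem MulAction.orbit_subset_of_smul_mem {G X : Type*} [Group G] [MulAction G X]
    {s : Set G} (hs : closure s = ⊤) {V : Set X} (hV : V.Finite)
    (hsV : ∀ g ∈ s, ∀ v ∈ V, g • v ∈ V) {x : X} (hx : x ∈ V) : MulAction.orbit G x ⊆ V := by
  have hstab : s ⊆ MulAction.stabilizer G V := fun g hg =>
    Set.eq_of_subset_of_ncard_le (Set.smul_set_subset_iff.2 (hsV g hg))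
      (Set.ncard_smul_set g V).ge hV
  rintro _ ⟨g, rfl⟩
  have hg : g • V = V := (closure_le _).2 hstab (hs ▸ mem_top g)
  exact hg ▸ Set.smul_mem_smul_set hx

theorem MonoidHom.injective_of_isSimpleGroup {G H : Type*} [Group G] [Group H] [IsSimpleGroup G]
    [Nontrivial H] (f : G →* H) (hf : Function.Surjective f) : Function.Injective f := by
  refine f.normal_ker.eq_bot_or_eq_top.elim f.ker_eq_bot_iff.1 fun h => ?_
  obtain ⟨z, hz⟩ := exists_ne (1 : H)
  obtain ⟨g, rfl⟩ := hf z
  exact absurd (MonoidHom.ker_eq_top_iff.1 h ▸ rfl : f g = 1) hz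

theorem IsSimpleGroup.eq_top_of_index_le_two {G : Type*} [Group G] [IsSimpleGroup G] [Finite G]
    {H : Subgroup G} (hH : H ≠ ⊥) (h2 : H.index ≤ 2) : H = ⊤ := by
  have h0 : H.index ≠ 0 := index_ne_zero_of_finite
  obtain h | h : H.index = 1 ∨ H.index = 2 := by omega
  · exact index_eq_one.1 h
  · exact (normal_of_index_eq_two h).eq_bot_or_eq_top.resolve_left hH

theorem alternatingGroup.eq_top_of_thirty_dvd_card {H : Subgroup (alternatingGroup (Fin 5))}
    (h : 30 ∣ Nat.card H) : H = ⊤ := by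
  have hmul := H.index_mul_card
  rw [nat_card_alternatingGroup, Nat.card_fin] at hmul
  refine IsSimpleGroup.eq_top_of_index_le_two ?_ ?_
  · rintro rfl
    rw [card_bot] at h
    norm_num at h
  · have h30 : 30 ≤ Nat.card H := Nat.le_of_dvd Nat.card_pos h
    norm_num [Nat.factorial] at hmul
    nlinarith

namespace Icosahedral

section Monoid

variable {M : Type*} [Monoid M]

theorem mul_self_of_sq_eq_one {a : M} (ha : a ^ 2 = 1) : a * a = 1 := by rw [← sq, ha]

theorem mul_mul_self_of_sq_eq_one {a : M} (ha : a ^ 2 = 1) (x : M) : a * (a * x) = x := by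
  rw [← mul_assoc, mul_self_of_sq_eq_one ha, one_mul]

def powFin (c : M) (k : Fin 5) : M := c ^ (k : ℕ)

@[simp] theorem powFin_zero (c : M) : powFin c 0 = 1 := pow_zero c

theorem powFin_one (c : M) : powFin c 1 = c := pow_one c

variable {c : M} (hc : c ^ 5 = 1)
include hc

theorem powFin_mul_powFin (i j : Fin 5) : powFin c i * powFin c j = powFin c (i + j) := by
  rw [powFin, powFin, powFin, ← pow_add, Fin.val_add, ← pow_eq_pow_mod _ hc]

theorem powFin_mul_powFin_mul (i j : Fin 5) (x : M) :
    powFin c i * (powFin c j * x) = powFin c (i + j) * x := by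
  rw [← mul_assoc, powFin_mul_powFin hc]

end Monoid

variable {G : Type*} [Group G]

section Relations

variable {a c : G} (ha : a ^ 2 = 1) (hc : c ^ 5 = 1) (hac : (a * c) ^ 3 = 1)
include ha hc hac

theorem a_c1_a : a * powFin c 1 * a = powFin c 4 * a * powFin c 4 := by
  rw [← powFin_one c] at hac
  refine mul_right_cancel (b := powFin c 1 * a * powFin c 1) ?_
  trans 1
  · rw [← hac]
    simp only [pow_succ, pow_zero, one_mul, mul_assoc]
  · simp only [mul_assoc, mul_mul_self_of_sq_eq_one ha, powFin_mul_powFin hc,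
      powFin_mul_powFin_mul hc, Fin.reduceAdd, powFin_zero, one_mul]

theorem a_c4_a : a * powFin c 4 * a = powFin c 1 * a * powFin c 1 := by
  have h₁ : a * powFin c 4 * a * (a * powFin c 1 * a) = 1 := by
    simp only [mul_assoc, mul_self_of_sq_eq_one ha, mul_mul_self_of_sq_eq_one ha,
      powFin_mul_powFin_mul hc, Fin.reduceAdd, powFin_zero, one_mul]
  have h₂ : a * powFin c 1 * a * (powFin c 1 * a * powFin c 1) = 1 := by
    rw [a_c1_a ha hc hac]
    simp only [mul_assoc, mul_mul_self_of_sq_eq_one ha, powFin_mul_powFin hc,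
      powFin_mul_powFin_mul hc, Fin.reduceAdd, powFin_zero, one_mul]
  exact left_inv_eq_right_inv h₁ h₂

theorem a_c2_a : a * powFin c 2 * a = powFin c 4 * a * powFin c 3 * a * powFin c 4 :=
  calc a * powFin c 2 * a = (a * powFin c 1 * a) * (a * powFin c 1 * a) := by
        simp only [mul_assoc, mul_mul_self_of_sq_eq_one ha, powFin_mul_powFin_mul hc,
          Fin.reduceAdd]
    _ = _ := by
        rw [a_c1_a ha hc hac]
        simp only [mul_assoc, powFin_mul_powFin_mul hc, Fin.reduceAdd]

theorem a_c3_a : a * powFin c 3 * a = powFin c 1 * a * powFin c 2 * a * powFin c 1 :=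
  calc a * powFin c 3 * a = (a * powFin c 4 * a) * (a * powFin c 4 * a) := by
        simp only [mul_assoc, mul_mul_self_of_sq_eq_one ha, powFin_mul_powFin_mul hc,
          Fin.reduceAdd]
    _ = _ := by
        rw [a_c4_a ha hc hac]
        simp only [mul_assoc, powFin_mul_powFin_mul hc, Fin.reduceAdd]

theorem a_c1_a_c2_a : a * powFin c 1 * a * powFin c 2 * a = powFin c 3 * a * powFin c 4 :=
  calc a * powFin c 1 * a * powFin c 2 * a = powFin c 4 * (a * powFin c 1 * a) := by
        conv_lhs => rw [a_c1_a ha hc hac]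
        simp only [mul_assoc, powFin_mul_powFin_mul hc, Fin.reduceAdd]
    _ = _ := by
        rw [a_c1_a ha hc hac]
        simp only [mul_assoc, powFin_mul_powFin_mul hc, Fin.reduceAdd]

theorem a_c2_a_c2_a :
    a * powFin c 2 * a * powFin c 2 * a = powFin c 4 * a * powFin c 2 * a * powFin c 4 :=
  calc a * powFin c 2 * a * powFin c 2 * a
      = powFin c 4 * a * powFin c 3 * (a * powFin c 1 * a) := by
        conv_lhs => rw [a_c2_a ha hc hac]
        simp only [mul_assoc, powFin_mul_powFin_mul hc, Fin.reduceAdd]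
    _ = _ := by
        rw [a_c1_a ha hc hac]
        simp only [mul_assoc, powFin_mul_powFin_mul hc, Fin.reduceAdd]

theorem a_c4_a_c2_a :
    a * powFin c 4 * a * powFin c 2 * a = powFin c 2 * a * powFin c 2 * a * powFin c 1 :=
  calc a * powFin c 4 * a * powFin c 2 * a = powFin c 1 * (a * powFin c 3 * a) := by
        conv_lhs => rw [a_c4_a ha hc hac]
        simp only [mul_assoc, powFin_mul_powFin_mul hc, Fin.reduceAdd]
    _ = _ := by
        rw [a_c3_a ha hc hac]
        simp only [mul_assoc, powFin_mul_powFin_mul hc, Fin.reduceAdd]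

theorem c1_a_c3_a_c2_a : powFin c 1 * (a * powFin c 3 * a * powFin c 2 * a) =
    a * powFin c 3 * a * powFin c 2 * a * powFin c 4 :=
  calc powFin c 1 * (a * powFin c 3 * a * powFin c 2 * a)
      = powFin c 1 * a * powFin c 2 * (a * powFin c 3 * a) * powFin c 4 := by
        conv_rhs => rw [a_c3_a ha hc hac]
        simp only [mul_assoc, powFin_mul_powFin hc, powFin_mul_powFin_mul hc, Fin.reduceAdd,
          powFin_zero, mul_one]
    _ = _ := by
        conv_rhs => rw [a_c3_a ha hc hac]
        simp only [mul_assoc, powFin_mul_powFin_mul hc, Fin.reduceAdd]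

end Relations

/-- The vertices of an icosahedron: the north pole `⟨c⟩` and the south pole, fixed by `c`, and an
upper and a lower ring of five, rotated by `c`. -/
def vertices (a c : G) : Set (G ⧸ zpowers c) :=
  {((1 : G) : G ⧸ zpowers c), ↑(a * powFin c 3 * a * powFin c 2 * a)} ∪
    Set.range (fun i => ↑(powFin c i * a)) ∪ Set.range (fun i => ↑(powFin c i * a * powFin c 2 * a))

section Vertices

variable {a c : G}

theorem vertices_finite : (vertices a c).Finite :=
  ((Set.toFinite _).union (Set.finite_range _)).union (Set.finite_range _)

theorem ncard_vertices_le : (vertices a c).ncard ≤ 12 := by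
  have hrange (f : Fin 5 → G ⧸ zpowers c) : (Set.range f).ncard ≤ 5 := by
    rw [← Nat.card_coe_set_eq]
    exact (Finite.card_range_le f).trans_eq (Nat.card_fin 5)
  have hpair (x y : G ⧸ zpowers c) : ({x, y} : Set _).ncard ≤ 2 :=
    (Set.ncard_insert_le _ _).trans (by rw [Set.ncard_singleton])
  exact (Set.ncard_union_le _ _).trans <| add_le_add ((Set.ncard_union_le _ _).trans <|
    add_le_add (hpair _ _) (hrange _)) (hrange _)

theorem north_mem_vertices : ((1 : G) : G ⧸ zpowers c) ∈ vertices a c := by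
  simp [vertices]

theorem south_mem_vertices :
    (↑(a * powFin c 3 * a * powFin c 2 * a) : G ⧸ zpowers c) ∈ vertices a c := by
  simp [vertices]

theorem upper_mem_vertices (i : Fin 5) : (↑(powFin c i * a) : G ⧸ zpowers c) ∈ vertices a c := by
  simp [vertices]

theorem lower_mem_vertices (i : Fin 5) :
    (↑(powFin c i * a * powFin c 2 * a) : G ⧸ zpowers c) ∈ vertices a c := by
  simp [vertices]

theorem smul_mem_vertices {g x y : G} (k : Fin 5) (h : g * x = y * powFin c k)
    (hy : (y : G ⧸ zpowers c) ∈ vertices a c) : g • (x : G ⧸ zpowers c) ∈ vertices a c := by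
  rwa [MulAction.Quotient.smul_mk, smul_eq_mul, h,
    QuotientGroup.mk_mul_of_mem y (show powFin c k ∈ zpowers c from pow_mem (mem_zpowers c) _)]

variable (ha : a ^ 2 = 1) (hc : c ^ 5 = 1) (hac : (a * c) ^ 3 = 1)
include ha hc hac

theorem c_smul_mem_vertices {v} (hv : v ∈ vertices a c) : c • v ∈ vertices a c := by
  have hc₁ (i : Fin 5) : c * powFin c i = powFin c (1 + i) := by
    rw [← powFin_mul_powFin hc, powFin_one]
  rcases hv with ((rfl | rfl) | ⟨i, rfl⟩) | ⟨i, rfl⟩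
  · exact smul_mem_vertices 1 (by rw [one_mul, mul_one, powFin_one]) north_mem_vertices
  · exact smul_mem_vertices 4
      (by simpa only [powFin_one, mul_assoc] using c1_a_c3_a_c2_a ha hc hac) south_mem_vertices
  · exact smul_mem_vertices 0 (by rw [← mul_assoc, hc₁, powFin_zero, mul_one])
      (upper_mem_vertices (1 + i))
  · exact smul_mem_vertices 0 (by simp only [← mul_assoc, hc₁, powFin_zero, mul_one])
      (lower_mem_vertices (1 + i))

theorem a_smul_mem_vertices {v} (hv : v ∈ vertices a c) : a • v ∈ vertices a c := by
  have ha₁ := mul_self_of_sq_eq_one ha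
  rcases hv with ((rfl | rfl) | ⟨i, rfl⟩) | ⟨i, rfl⟩
  · exact smul_mem_vertices 0 (by simp) (upper_mem_vertices 0)
  · exact smul_mem_vertices 0 (by simp only [← mul_assoc, ha₁, one_mul, powFin_zero, mul_one])
      (lower_mem_vertices 3)
  · fin_cases i <;> simp only [Fin.reduceFinMk]
    · exact smul_mem_vertices 0 (by simp [ha₁]) north_mem_vertices
    · exact smul_mem_vertices 4 (by simpa only [mul_assoc] using a_c1_a ha hc hac)
        (upper_mem_vertices 4)
    · exact smul_mem_vertices 0 (by simp [mul_assoc]) (lower_mem_vertices 0)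
    · exact smul_mem_vertices 1 (by simpa only [mul_assoc] using a_c3_a ha hc hac)
        (lower_mem_vertices 1)
    · exact smul_mem_vertices 1 (by simpa only [mul_assoc] using a_c4_a ha hc hac)
        (upper_mem_vertices 1)
  · fin_cases i <;> simp only [Fin.reduceFinMk]
    · exact smul_mem_vertices 0 (by simp [← mul_assoc, ha₁]) (upper_mem_vertices 2)
    · exact smul_mem_vertices 4 (by simpa only [mul_assoc] using a_c1_a_c2_a ha hc hac)
        (upper_mem_vertices 3)
    · exact smul_mem_vertices 4 (by simpa only [mul_assoc] using a_c2_a_c2_a ha hc hac)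
        (lower_mem_vertices 4)
    · exact smul_mem_vertices 0 (by simp [mul_assoc]) south_mem_vertices
    · exact smul_mem_vertices 1 (by simpa only [mul_assoc] using a_c4_a_c2_a ha hc hac)
        (lower_mem_vertices 2)

theorem vertices_eq_univ (hgen : closure {a, c} = ⊤) : vertices a c = Set.univ := by
  refine Set.eq_univ_of_univ_subset ?_
  rw [← MulAction.orbit_eq_univ G ((1 : G) : G ⧸ zpowers c)]
  refine MulAction.orbit_subset_of_smul_mem hgen vertices_finite ?_ north_mem_vertices
  rintro g (rfl | rfl) v hv
  exacts [a_smul_mem_vertices ha hc hac hv, c_smul_mem_vertices ha hc hac hv]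

theorem finite_and_card_le (hgen : closure {a, c} = ⊤) : Finite G ∧ Nat.card G ≤ 60 := by
  have hV := vertices_eq_univ ha hc hac hgen
  have : Finite (G ⧸ zpowers c) := Set.finite_univ_iff.1 (hV ▸ vertices_finite)
  have hindex : (zpowers c).index ≤ 12 := by
    rw [index_eq_card, ← Set.ncard_univ, ← hV]
    exact ncard_vertices_le
  have hord : orderOf c ≤ 5 := orderOf_le_of_pow_eq_one (by norm_num) hc
  have hcard : Nat.card G = orderOf c * (zpowers c).index := by
    rw [← Nat.card_zpowers, card_mul_index]
  refine ⟨Nat.finite_of_card_ne_zero ?_, ?_⟩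
  · rw [hcard]
    exact mul_ne_zero (orderOf_pos_iff.2 (isOfFinOrder_iff_pow_eq_one.2 ⟨5, by norm_num, hc⟩)).ne'
      index_ne_zero_of_finite
  · rw [hcard]
    exact (Nat.mul_le_mul hord hindex).trans (by norm_num)

end Vertices

end Icosahedral

theorem finite_and_card_le_sixty_of_relations {G : Type*} [Group G] {x y : G}
    (hgen : closure {x, y} = ⊤) (hx : x ^ 2 = 1) (hy : y ^ 3 = 1) (hxy : (x * y) ^ 5 = 1) :
    Finite G ∧ Nat.card G ≤ 60 := by
  refine Icosahedral.finite_and_card_le hx hxy ?_ ?_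
  · rwa [← mul_assoc, Icosahedral.mul_self_of_sq_eq_one hx, one_mul]
  · rw [eq_top_iff, ← hgen, closure_le]
    have hx' : x ∈ closure {x, x * y} := subset_closure (Set.mem_insert _ _)
    have hxy' : x * y ∈ closure {x, x * y} := subset_closure (Set.mem_insert_of_mem _ rfl)
    rintro g (rfl | rfl)
    exacts [hx', by simpa using mul_mem (inv_mem hx') hxy']

def vonDyckRels (l m n : ℕ) : Set (FreeGroup (Fin 2)) :=
  {.of 0 ^ l, .of 1 ^ m, (.of 0 * .of 1) ^ n}

abbrev VonDyckGroup (l m n : ℕ) := PresentedGroup (vonDyckRels l m n)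

namespace VonDyckGroup

open PresentedGroup

variable {l m n : ℕ}

theorem closure_of : closure {of 0, of 1} = (⊤ : Subgroup (VonDyckGroup l m n)) := by
  rw [← closure_range_of]
  congr
  ext
  simp [Fin.exists_fin_two, eq_comm]

section Lift

variable {G : Type*} [Group G] {x y : G}

def lift (hx : x ^ l = 1) (hy : y ^ m = 1) (hxy : (x * y) ^ n = 1) : VonDyckGroup l m n →* G :=
  toGroup (f := ![x, y]) (by rintro r (rfl | rfl | rfl) <;> simp [hx, hy, hxy])

variable (hx : x ^ l = 1) (hy : y ^ m = 1) (hxy : (x * y) ^ n = 1)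

theorem lift_of_zero : lift hx hy hxy (of 0) = x := toGroup.of _

theorem lift_of_one : lift hx hy hxy (of 1) = y := toGroup.of _

theorem lift_surjective (hgen : closure {x, y} = ⊤) : Function.Surjective (lift hx hy hxy) := by
  rw [← MonoidHom.range_eq_top, eq_top_iff, ← hgen, closure_le]
  rintro g (rfl | rfl)
  exacts [⟨of 0, lift_of_zero hx hy hxy⟩, ⟨of 1, lift_of_one hx hy hxy⟩]

end Lift

open Equiv

theorem finite_and_card_le_sixty :
    Finite (VonDyckGroup 2 3 5) ∧ Nat.card (VonDyckGroup 2 3 5) ≤ 60 :=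
  finite_and_card_le_sixty_of_relations closure_of (one_of_mem (by simp [vonDyckRels]))
    (one_of_mem (by simp [vonDyckRels])) (one_of_mem (by simp [vonDyckRels]))

def alternatingGroupX : alternatingGroup (Fin 5) :=
  ⟨c[0, 1] * c[2, 3], Perm.mem_alternatingGroup.2 (by decide)⟩

def alternatingGroupY : alternatingGroup (Fin 5) :=
  ⟨c[1, 2, 4], Perm.mem_alternatingGroup.2 (by decide)⟩

set_option maxRecDepth 4000 in
def toAlternatingGroup : VonDyckGroup 2 3 5 →* alternatingGroup (Fin 5) :=
  lift (x := alternatingGroupX) (y := alternatingGroupY) (Subtype.ext (by decide))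
    (Subtype.ext (by decide)) (Subtype.ext (by decide))

set_option maxRecDepth 4000 in
theorem toAlternatingGroup_surjective : Function.Surjective toAlternatingGroup := by
  rw [← MonoidHom.range_eq_top]
  have hx : alternatingGroupX ∈ toAlternatingGroup.range := ⟨of 0, lift_of_zero _ _ _⟩
  have hy : alternatingGroupY ∈ toAlternatingGroup.range := ⟨of 1, lift_of_one _ _ _⟩
  have : Fact (Nat.Prime 5) := ⟨by norm_num⟩
  have h2 := orderOf_eq_prime (x := alternatingGroupX) (p := 2) (by decide) (by decide) ▸
    orderOf_dvd_natCard _ hx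
  have h3 := orderOf_eq_prime (x := alternatingGroupY) (p := 3) (by decide) (by decide) ▸
    orderOf_dvd_natCard _ hy
  have h5 := orderOf_eq_prime (x := alternatingGroupX * alternatingGroupY) (p := 5)
    (by decide) (by decide) ▸ orderOf_dvd_natCard _ (mul_mem hx hy)
  exact alternatingGroup.eq_top_of_thirty_dvd_card <| Nat.Coprime.mul_dvd_of_dvd_of_dvd
    (by norm_num) (Nat.Coprime.mul_dvd_of_dvd_of_dvd (by norm_num) h2 h3) h5

noncomputable def mulEquivAlternatingGroup : VonDyckGroup 2 3 5 ≃* alternatingGroup (Fin 5) :=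
  have := finite_and_card_le_sixty.1
  MulEquiv.ofBijective toAlternatingGroup <| toAlternatingGroup_surjective.bijective_of_nat_card_le
    (by rw [nat_card_alternatingGroup, Nat.card_fin]; exact finite_and_card_le_sixty.2)

end VonDyckGroup

/-- Any nontrivial group generated by two elements `μ, η` with `μ² = 1`, `η³ = 1`,
`(μη)⁵ = 1` is isomorphic to the alternating group `A₅`. -/
theorem iso_A5_of_relations (G : Type*) [Group G] (hG : Nontrivial G) (μ η : G)
    (hgen : Subgroup.closure ({μ, η} : Set G) = ⊤)
    (h1 : μ ^ 2 = 1) (h2 : η ^ 3 = 1) (h3 : (μ * η) ^ 5 = 1) :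
    Nonempty (G ≃* alternatingGroup (Fin 5)) := by
  have := VonDyckGroup.mulEquivAlternatingGroup.isSimpleGroup
  let φ := VonDyckGroup.lift h1 h2 h3
  have hφ : Function.Surjective φ := VonDyckGroup.lift_surjective h1 h2 h3 hgen
  exact ⟨(MulEquiv.ofBijective φ ⟨φ.injective_of_isSimpleGroup hφ, hφ⟩).symm.trans
    VonDyckGroup.mulEquivAlternatingGroup⟩
end

section
/- In A₅, with σ = (1 2)(3 4 5) ∈ S₅ and ω = (1 2 3), the three conjugates σ^i ω σ^{-i} for i = 1, 2, 3 generate A₅. -/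
/-- The generating set. -/
def conjGenSet : Set (Equiv.Perm (Fin 5)) :=
  {c[0, 1] * c[2, 3, 4] * c[0, 1, 2] * (c[0, 1] * c[2, 3, 4])⁻¹,
   (c[0, 1] * c[2, 3, 4]) ^ 2 * c[0, 1, 2] * ((c[0, 1] * c[2, 3, 4]) ^ 2)⁻¹,
   (c[0, 1] * c[2, 3, 4]) ^ 3 * c[0, 1, 2] * ((c[0, 1] * c[2, 3, 4]) ^ 3)⁻¹}

set_option maxRecDepth 4000 in
theorem conj_generate_A5_six_valent_aux :
    Subgroup.closure conjGenSet = alternatingGroup (Fin 5) := by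
  have ha : (c[0,3,1] : Equiv.Perm (Fin 5)) ∈ Subgroup.closure conjGenSet :=
    Subgroup.subset_closure (Set.mem_insert_iff.mpr (Or.inl (by decide)))
  have hb : (c[0,1,4] : Equiv.Perm (Fin 5)) ∈ Subgroup.closure conjGenSet :=
    Subgroup.subset_closure
      (Set.mem_insert_iff.mpr (Or.inr (Set.mem_insert_iff.mpr (Or.inl (by decide)))))
  have hc : (c[1,0,2] : Equiv.Perm (Fin 5)) ∈ Subgroup.closure conjGenSet :=
    Subgroup.subset_closure
      (Set.mem_insert_iff.mpr (Or.inr (Set.mem_insert_iff.mpr (Or.inr (by decide)))))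
  -- the closure is contained in the alternating group
  have hKA : Subgroup.closure conjGenSet ≤ alternatingGroup (Fin 5) := by
    rw [Subgroup.closure_le]
    rintro x (rfl | rfl | rfl) <;>
      exact Equiv.Perm.mem_alternatingGroup.mpr (by decide)
  -- elements of order 3 and 5
  have h3 : orderOf (c[0,3,1] : Equiv.Perm (Fin 5)) = 3 :=
    orderOf_eq_prime (by decide) (by decide)
  haveI : Fact (Nat.Prime 5) := ⟨by norm_num⟩
  have h5 : orderOf ((c[0,3,1] * c[0,1,4] * c[1,0,2]) : Equiv.Perm (Fin 5)) = 5 :=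
    orderOf_eq_prime (by decide) (by decide)
  have hd3 : (3 : ℕ) ∣ Nat.card (Subgroup.closure conjGenSet) := by
    have := Subgroup.orderOf_dvd_natCard _ ha
    rwa [h3] at this
  have hd5 : (5 : ℕ) ∣ Nat.card (Subgroup.closure conjGenSet) := by
    have := Subgroup.orderOf_dvd_natCard _ (mul_mem (mul_mem ha hb) hc)
    rwa [h5] at this
  have h15 : (15 : ℕ) ∣ Nat.card (Subgroup.closure conjGenSet) :=
    (Nat.Coprime.mul_dvd_of_dvd_of_dvd (by norm_num) hd3 hd5)
  -- cardinality of A₅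
  have hcA : Nat.card (alternatingGroup (Fin 5)) = 60 := by
    have h2 := two_mul_card_alternatingGroup (α := Fin 5)
    rw [Fintype.card_perm] at h2
    simp only [Fintype.card_fin] at h2
    have hfact : Nat.factorial 5 = 120 := by norm_num [Nat.factorial]
    rw [hfact] at h2
    rw [Nat.card_eq_fintype_card]
    omega
  -- the subgroup of A₅ corresponding to the closure
  set H := (Subgroup.closure conjGenSet).subgroupOf (alternatingGroup (Fin 5)) with hH
  have hcard : Nat.card H = Nat.card (Subgroup.closure conjGenSet) :=
    Nat.card_congr (Subgroup.subgroupOfEquivOfLe hKA).toEquiv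
  have hmul : H.index * Nat.card H = 60 := by
    rw [Subgroup.index_mul_card, hcA]
  have hpos : 0 < Nat.card H := Nat.card_pos
  have h15' : (15 : ℕ) ∣ Nat.card H := hcard ▸ h15
  have hidx : H.index ≤ 4 := by
    have hge : 15 ≤ Nat.card H := Nat.le_of_dvd hpos h15'
    nlinarith [hmul, hge, Nat.zero_le H.index]
  -- use simplicity of A₅ and the action on cosets
  rcases (IsSimpleGroup.eq_bot_or_eq_top_of_normal H.normalCore inferInstance) with hbot | htop
  · -- the coset action is faithful, contradiction with cardinalities
    exfalso
    have hker : (MulAction.toPermHom (alternatingGroup (Fin 5))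
        (alternatingGroup (Fin 5) ⧸ H)).ker = ⊥ := by
      rw [← Subgroup.normalCore_eq_ker, hbot]
    have hinj := (MonoidHom.ker_eq_bot_iff _).mp hker
    have hle := Nat.card_le_card_of_injective _ hinj
    have hpq : Nat.card (Equiv.Perm (alternatingGroup (Fin 5) ⧸ H)) =
        Nat.factorial H.index := by
      classical
      have : Finite (alternatingGroup (Fin 5) ⧸ H) := Quotient.finite _
      cases nonempty_fintype (alternatingGroup (Fin 5) ⧸ H)
      rw [Nat.card_eq_fintype_card, Fintype.card_perm, ← Nat.card_eq_fintype_card,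
        Subgroup.index_eq_card]
    rw [hcA, hpq] at hle
    have hfac : Nat.factorial H.index ≤ 24 := by
      have h4 : Nat.factorial H.index ≤ Nat.factorial 4 := Nat.factorial_le hidx
      norm_num [Nat.factorial] at h4
      omega
    omega
  · -- the normal core is everything, so H = ⊤ and A₅ ≤ closure
    have hHtop : H = ⊤ := le_antisymm le_top (htop ▸ Subgroup.normalCore_le H)
    have : alternatingGroup (Fin 5) ≤ Subgroup.closure conjGenSet :=
      Subgroup.subgroupOf_eq_top.mp hHtop
    exact le_antisymm hKA this

/-- In `A₅` (letters `1,…,5` rendered as `0,…,4` in `Fin 5`), with `σ = (1 2)(3 4 5)`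
and `ω = (1 2 3)`, the three conjugates `σ^i ω σ^{-i}`, `i = 1, 2, 3`, generate `A₅`. -/
theorem conj_generate_A5_six_valent :
    let σ : Equiv.Perm (Fin 5) := c[0, 1] * c[2, 3, 4]
    let ω : Equiv.Perm (Fin 5) := c[0, 1, 2]
    Subgroup.closure
        ({σ * ω * σ⁻¹, σ ^ 2 * ω * (σ ^ 2)⁻¹, σ ^ 3 * ω * (σ ^ 3)⁻¹} :
          Set (Equiv.Perm (Fin 5))) = alternatingGroup (Fin 5) := by
  intro σ ω
  exact conj_generate_A5_six_valent_aux
end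

section
/- In A₅, with σ = (1 2 3) and ω = (2 4)(3 5), the conjugates σ^i ω σ^{-i} for i = 1, 2, 3 generate A₅. -/
set_option maxRecDepth 40000


/-- In `A₅` (letters `1,…,5` rendered as `0,…,4` in `Fin 5`), with `σ = (1 2 3)` and
`ω = (2 4)(3 5)`, the conjugates `σ^i ω σ^{-i}`, `i = 1, 2, 3`, generate `A₅`. -/
theorem conj_generate_A5_three_valent :
    let σ : Equiv.Perm (Fin 5) := c[0, 1, 2]
    let ω : Equiv.Perm (Fin 5) := c[1, 3] * c[2, 4]
    Subgroup.closure
        ({σ * ω * σ⁻¹, σ ^ 2 * ω * (σ ^ 2)⁻¹, σ ^ 3 * ω * (σ ^ 3)⁻¹} :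
          Set (Equiv.Perm (Fin 5))) = alternatingGroup (Fin 5) := by
  intro σ ω
  set S : Set (Equiv.Perm (Fin 5)) :=
    {σ * ω * σ⁻¹, σ ^ 2 * ω * (σ ^ 2)⁻¹, σ ^ 3 * ω * (σ ^ 3)⁻¹} with hS
  have ha : σ * ω * σ⁻¹ ∈ Subgroup.closure S :=
    Subgroup.subset_closure (Or.inl rfl)
  have hb : σ ^ 2 * ω * (σ ^ 2)⁻¹ ∈ Subgroup.closure S :=
    Subgroup.subset_closure (Or.inr (Or.inl rfl))
  have hc : σ ^ 3 * ω * (σ ^ 3)⁻¹ ∈ Subgroup.closure S :=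
    Subgroup.subset_closure (Or.inr (Or.inr rfl))
  apply le_antisymm
  · rw [Subgroup.closure_le]
    rintro x (rfl | rfl | rfl) <;>
      · show _ ∈ alternatingGroup (Fin 5)
        rw [Equiv.Perm.mem_alternatingGroup]
        decide
  · rw [← Equiv.Perm.closure_three_cycles_eq_alternating, Subgroup.closure_le]
    intro f hf
    have h3 : f ^ 3 = 1 := by
      have := hf.orderOf
      rw [← this]
      exact pow_orderOf_eq_one f
    have hne : f ≠ 1 := by
      intro h
      have := hf.orderOf
      rw [h] at this
      simp at this
    have hmem : f ∈ ({c[(2:Fin 5), 3, 4], c[(2:Fin 5), 4, 3], c[(1:Fin 5), 2, 3], c[(1:Fin 5), 2, 4], c[(1:Fin 5), 3, 2], c[(1:Fin 5), 3, 4], c[(1:Fin 5), 4, 2], c[(1:Fin 5), 4, 3], c[(0:Fin 5), 1, 2], c[(0:Fin 5), 1, 3], c[(0:Fin 5), 1, 4], c[(0:Fin 5), 2, 1], c[(0:Fin 5), 2, 3], c[(0:Fin 5), 2, 4], c[(0:Fin 5), 3, 1], c[(0:Fin 5), 3, 2], c[(0:Fin 5), 3, 4], c[(0:Fin 5), 4,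 1], c[(0:Fin 5), 4, 2], c[(0:Fin 5), 4, 3]} : Finset (Equiv.Perm (Fin 5))) := by
      clear hf ha hb hc hS
      revert h3 hne
      revert f
      decide
    simp only [Finset.mem_insert, Finset.mem_singleton] at hmem
    rcases hmem with rfl|rfl|rfl|rfl|rfl|rfl|rfl|rfl|rfl|rfl|rfl|rfl|rfl|rfl|rfl|rfl|rfl|rfl|rfl|rfl
    · have he : c[(2:Fin 5), 3, 4] = (σ ^ 2 * ω * (σ ^ 2)⁻¹) * (σ * ω * σ⁻¹) * (σ ^ 2 * ω * (σ ^ 2)⁻¹) * (σ ^ 3 * ω * (σ ^ 3)⁻¹) * (σ * ω * σ⁻¹) := by decide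
      rw [he]
      exact (mul_mem (mul_mem (mul_mem (mul_mem hb ha) hb) hc) ha)
    · have he : c[(2:Fin 5), 4, 3] = (σ * ω * σ⁻¹) * (σ ^ 3 * ω * (σ ^ 3)⁻¹) * (σ ^ 2 * ω * (σ ^ 2)⁻¹) * (σ * ω * σ⁻¹) * (σ ^ 2 * ω * (σ ^ 2)⁻¹) := by decide
      rw [he]
      exact (mul_mem (mul_mem (mul_mem (mul_mem ha hc) hb) ha) hb)
    · have he : c[(1:Fin 5), 2, 3] = (σ ^ 2 * ω * (σ ^ 2)⁻¹) * (σ ^ 3 * ω * (σ ^ 3)⁻¹) * (σ ^ 2 * ω * (σ ^ 2)⁻¹) * (σ * ω * σ⁻¹) := by decide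
      rw [he]
      exact (mul_mem (mul_mem (mul_mem hb hc) hb) ha)
    · have he : c[(1:Fin 5), 2, 4] = (σ ^ 2 * ω * (σ ^ 2)⁻¹) * (σ * ω * σ⁻¹) * (σ ^ 3 * ω * (σ ^ 3)⁻¹) * (σ * ω * σ⁻¹) := by decide
      rw [he]
      exact (mul_mem (mul_mem (mul_mem hb ha) hc) ha)
    · have he : c[(1:Fin 5), 3, 2] = (σ * ω * σ⁻¹) * (σ ^ 2 * ω * (σ ^ 2)⁻¹) * (σ ^ 3 * ω * (σ ^ 3)⁻¹) * (σ ^ 2 * ω * (σ ^ 2)⁻¹) := by decide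
      rw [he]
      exact (mul_mem (mul_mem (mul_mem ha hb) hc) hb)
    · have he : c[(1:Fin 5), 3, 4] = (σ * ω * σ⁻¹) * (σ ^ 3 * ω * (σ ^ 3)⁻¹) * (σ * ω * σ⁻¹) * (σ ^ 2 * ω * (σ ^ 2)⁻¹) * (σ ^ 3 * ω * (σ ^ 3)⁻¹) := by decide
      rw [he]
      exact (mul_mem (mul_mem (mul_mem (mul_mem ha hc) ha) hb) hc)
    · have he : c[(1:Fin 5), 4, 2] = (σ * ω * σ⁻¹) * (σ ^ 3 * ω * (σ ^ 3)⁻¹) * (σ * ω * σ⁻¹) * (σ ^ 2 * ω * (σ ^ 2)⁻¹) := by decide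
      rw [he]
      exact (mul_mem (mul_mem (mul_mem ha hc) ha) hb)
    · have he : c[(1:Fin 5), 4, 3] = (σ * ω * σ⁻¹) * (σ ^ 2 * ω * (σ ^ 2)⁻¹) * (σ * ω * σ⁻¹) * (σ ^ 3 * ω * (σ ^ 3)⁻¹) * (σ ^ 2 * ω * (σ ^ 2)⁻¹) := by decide
      rw [he]
      exact (mul_mem (mul_mem (mul_mem (mul_mem ha hb) ha) hc) hb)
    · have he : c[(0:Fin 5), 1, 2] = (σ * ω * σ⁻¹) * (σ ^ 2 * ω * (σ ^ 2)⁻¹) * (σ ^ 3 * ω * (σ ^ 3)⁻¹) * (σ * ω * σ⁻¹) * (σ ^ 2 * ω * (σ ^ 2)⁻¹) := by decide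
      rw [he]
      exact (mul_mem (mul_mem (mul_mem (mul_mem ha hb) hc) ha) hb)
    · have he : c[(0:Fin 5), 1, 3] = (σ * ω * σ⁻¹) * (σ ^ 2 * ω * (σ ^ 2)⁻¹) * (σ * ω * σ⁻¹) * (σ ^ 3 * ω * (σ ^ 3)⁻¹) := by decide
      rw [he]
      exact (mul_mem (mul_mem (mul_mem ha hb) ha) hc)
    · have he : c[(0:Fin 5), 1, 4] = (σ * ω * σ⁻¹) * (σ ^ 3 * ω * (σ ^ 3)⁻¹) * (σ ^ 2 * ω * (σ ^ 2)⁻¹) * (σ ^ 3 * ω * (σ ^ 3)⁻¹) := by decide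
      rw [he]
      exact (mul_mem (mul_mem (mul_mem ha hc) hb) hc)
    · have he : c[(0:Fin 5), 2, 1] = (σ * ω * σ⁻¹) * (σ ^ 3 * ω * (σ ^ 3)⁻¹) * (σ ^ 2 * ω * (σ ^ 2)⁻¹) * (σ * ω * σ⁻¹) * (σ ^ 3 * ω * (σ ^ 3)⁻¹) := by decide
      rw [he]
      exact (mul_mem (mul_mem (mul_mem (mul_mem ha hc) hb) ha) hc)
    · have he : c[(0:Fin 5), 2, 3] = (σ ^ 2 * ω * (σ ^ 2)⁻¹) * (σ ^ 3 * ω * (σ ^ 3)⁻¹) * (σ * ω * σ⁻¹) * (σ ^ 3 * ω * (σ ^ 3)⁻¹) := by decide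
      rw [he]
      exact (mul_mem (mul_mem (mul_mem hb hc) ha) hc)
    · have he : c[(0:Fin 5), 2, 4] = (σ ^ 2 * ω * (σ ^ 2)⁻¹) * (σ * ω * σ⁻¹) * (σ ^ 2 * ω * (σ ^ 2)⁻¹) * (σ ^ 3 * ω * (σ ^ 3)⁻¹) := by decide
      rw [he]
      exact (mul_mem (mul_mem (mul_mem hb ha) hb) hc)
    · have he : c[(0:Fin 5), 3, 1] = (σ ^ 3 * ω * (σ ^ 3)⁻¹) * (σ * ω * σ⁻¹) * (σ ^ 2 * ω * (σ ^ 2)⁻¹) * (σ * ω * σ⁻¹) := by decide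
      rw [he]
      exact (mul_mem (mul_mem (mul_mem hc ha) hb) ha)
    · have he : c[(0:Fin 5), 3, 2] = (σ ^ 3 * ω * (σ ^ 3)⁻¹) * (σ * ω * σ⁻¹) * (σ ^ 3 * ω * (σ ^ 3)⁻¹) * (σ ^ 2 * ω * (σ ^ 2)⁻¹) := by decide
      rw [he]
      exact (mul_mem (mul_mem (mul_mem hc ha) hc) hb)
    · have he : c[(0:Fin 5), 3, 4] = (σ * ω * σ⁻¹) * (σ ^ 2 * ω * (σ ^ 2)⁻¹) * (σ ^ 3 * ω * (σ ^ 3)⁻¹) * (σ * ω * σ⁻¹) * (σ ^ 3 * ω * (σ ^ 3)⁻¹) := by decide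
      rw [he]
      exact (mul_mem (mul_mem (mul_mem (mul_mem ha hb) hc) ha) hc)
    · have he : c[(0:Fin 5), 4, 1] = (σ ^ 3 * ω * (σ ^ 3)⁻¹) * (σ ^ 2 * ω * (σ ^ 2)⁻¹) * (σ ^ 3 * ω * (σ ^ 3)⁻¹) * (σ * ω * σ⁻¹) := by decide
      rw [he]
      exact (mul_mem (mul_mem (mul_mem hc hb) hc) ha)
    · have he : c[(0:Fin 5), 4, 2] = (σ ^ 3 * ω * (σ ^ 3)⁻¹) * (σ ^ 2 * ω * (σ ^ 2)⁻¹) * (σ * ω * σ⁻¹) * (σ ^ 2 * ω * (σ ^ 2)⁻¹) := by decide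
      rw [he]
      exact (mul_mem (mul_mem (mul_mem hc hb) ha) hb)
    · have he : c[(0:Fin 5), 4, 3] = (σ ^ 2 * ω * (σ ^ 2)⁻¹) * (σ * ω * σ⁻¹) * (σ ^ 3 * ω * (σ ^ 3)⁻¹) * (σ ^ 2 * ω * (σ ^ 2)⁻¹) * (σ ^ 3 * ω * (σ ^ 3)⁻¹) := by decide
      rw [he]
      exact (mul_mem (mul_mem (mul_mem (mul_mem hb ha) hc) hb) hc)
end

section
/- In PGL(2,p) for p prime, every element commuting with the image of the diagonal matrix diag(e,1), where e generates F_p^×, is itself the image of a diagonal matrix. -/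
/-- In `PGL(2,p)` (`p > 3` prime), every element commuting with the image of the
diagonal matrix `diag(e, 1)`, where `e` generates `F_p^×`, is itself the image of a
diagonal matrix. -/
theorem commute_with_diag_is_diag (p : ℕ) [Fact p.Prime] (hp : 3 < p)
    (e : (ZMod p)ˣ) (he : ∀ u : (ZMod p)ˣ, u ∈ Subgroup.zpowers e)
    (d : Matrix.GeneralLinearGroup (Fin 2) (ZMod p))
    (hd : (d : Matrix (Fin 2) (Fin 2) (ZMod p)) = !![(e : ZMod p), 0; 0, 1])
    (g : Matrix.GeneralLinearGroup (Fin 2) (ZMod p) ⧸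
        Subgroup.center (Matrix.GeneralLinearGroup (Fin 2) (ZMod p)))
    (hcomm : g * QuotientGroup.mk d = QuotientGroup.mk d * g) :
    ∃ m : Matrix.GeneralLinearGroup (Fin 2) (ZMod p),
      (∃ a b : ZMod p, (m : Matrix (Fin 2) (Fin 2) (ZMod p)) = !![a, 0; 0, b]) ∧
        QuotientGroup.mk m = g := by
  have hcard : Nat.card (ZMod p)ˣ = p - 1 := by
    rw [Nat.card_eq_fintype_card, ZMod.card_units_eq_totient, Nat.totient_prime Fact.out]
  have horder : orderOf e = p - 1 := by
    rw [← hcard]; exact orderOf_eq_card_of_forall_mem_zpowers he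
  have he1 : (e : ZMod p) ≠ 1 := by
    intro h
    have h1 : e = 1 := Units.ext (by simpa using h)
    rw [h1, orderOf_one] at horder; omega
  obtain ⟨M, rfl⟩ := QuotientGroup.mk_surjective g
  rw [← QuotientGroup.mk_mul, ← QuotientGroup.mk_mul, QuotientGroup.eq] at hcomm
  set z := (M * d)⁻¹ * (d * M) with hz
  have hzc := Subgroup.mem_center_iff.mp hcomm
  set Z : Matrix (Fin 2) (Fin 2) (ZMod p) := (z : Matrix (Fin 2) (Fin 2) (ZMod p)) with hZ
  -- Z commutes with the two unipotent matrices, hence is scalar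
  have hdet1 : (!![1,1;0,1] : Matrix (Fin 2) (Fin 2) (ZMod p)).det ≠ 0 := by
    simp [Matrix.det_fin_two_of]
  have hdet2 : (!![1,0;1,1] : Matrix (Fin 2) (Fin 2) (ZMod p)).det ≠ 0 := by
    simp [Matrix.det_fin_two_of]
  set u1 := Matrix.GeneralLinearGroup.mkOfDetNeZero _ hdet1 with hu1
  set u2 := Matrix.GeneralLinearGroup.mkOfDetNeZero _ hdet2 with hu2
  have hu1c : (u1 : Matrix (Fin 2) (Fin 2) (ZMod p)) = !![1,1;0,1] := rfl
  have hu2c : (u2 : Matrix (Fin 2) (Fin 2) (ZMod p)) = !![1,0;1,1] := rfl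
  have h1 : (!![1,1;0,1] : Matrix (Fin 2) (Fin 2) (ZMod p)) * Z = Z * !![1,1;0,1] := by
    have := congrArg Units.val (hzc u1)
    simpa [Units.val_mul, hu1c, hZ] using this
  have h2 : (!![1,0;1,1] : Matrix (Fin 2) (Fin 2) (ZMod p)) * Z = Z * !![1,0;1,1] := by
    have := congrArg Units.val (hzc u2)
    simpa [Units.val_mul, hu2c, hZ] using this
  have e1 := Matrix.ext_iff.mpr h1
  have e2 := Matrix.ext_iff.mpr h2
  have hZ10 : Z 1 0 = 0 := by
    have := e1 0 0
    simp [Matrix.mul_apply, Fin.sum_univ_two] at this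
    linear_combination this
  have hZ01 : Z 0 1 = 0 := by
    have := e2 0 0
    simp [Matrix.mul_apply, Fin.sum_univ_two] at this
    linear_combination this
  have hZ11 : Z 1 1 = Z 0 0 := by
    have := e1 0 1
    simp [Matrix.mul_apply, Fin.sum_univ_two, hZ01, hZ10] at this
    linear_combination this
  set c : ZMod p := Z 0 0 with hc
  -- main equation: (M * d) * z = d * M
  have hmain : ((M : Matrix (Fin 2) (Fin 2) (ZMod p)) * d) * Z = (d : Matrix (Fin 2) (Fin 2) (ZMod p)) * M := by
    have : (M * d) * z = d * M := by
      rw [hz, mul_inv_cancel_left]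
    have := congrArg Units.val this
    simpa [Units.val_mul, hZ] using this
  set A : Matrix (Fin 2) (Fin 2) (ZMod p) := (M : Matrix (Fin 2) (Fin 2) (ZMod p)) with hA
  have em := Matrix.ext_iff.mpr hmain
  have q00 := em 0 0
  have q01 := em 0 1
  have q10 := em 1 0
  have q11 := em 1 1
  simp [Matrix.mul_apply, Fin.sum_univ_two, hd, hZ01, hZ10, hZ11, ← hc, ← hA] at q00 q01 q10 q11
  -- q00 : A 0 0 * e * c = e * A 0 0,  etc (check exact forms)
  have hene : (e : ZMod p) ≠ 0 := Units.ne_zero e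
  by_cases hc1 : c = 1
  · -- c = 1 : M is diagonal
    rw [hc1] at q01 q10
    have hA01 : A 0 1 = 0 := by
      rcases mul_eq_zero.mp (show A 0 1 * ((e:ZMod p) - 1) = 0 by linear_combination -q01) with h | h
      · exact h
      · exact absurd (show (e:ZMod p) = 1 by linear_combination h) he1
    have hA10 : A 1 0 = 0 := by
      rcases mul_eq_zero.mp (show A 1 0 * ((e:ZMod p) - 1) = 0 by linear_combination q10) with h | h
      · exact h
      · exact absurd (show (e:ZMod p) = 1 by linear_combination h) he1
    refine ⟨M, ⟨A 0 0, A 1 1, ?_⟩, rfl⟩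
    rw [← hA]
    ext i j
    fin_cases i <;> fin_cases j <;> simp [hA01, hA10]
  · -- c ≠ 1 : contradiction
    exfalso
    have hA00 : A 0 0 = 0 := by
      rcases mul_eq_zero.mp (show A 0 0 * ((e:ZMod p) * (c - 1)) = 0 by linear_combination q00) with h | h
      · exact h
      · rcases mul_eq_zero.mp h with h' | h'
        · exact absurd h' hene
        · exact absurd (show c = 1 by linear_combination h') hc1
    have hA11 : A 1 1 = 0 := by
      rcases mul_eq_zero.mp (show A 1 1 * (c - 1) = 0 by linear_combination q11) with h | h
      · exact h
      · exact absurd (show c = 1 by linear_combination h) hc1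
    have hdetM : A.det ≠ 0 := by
      have : IsUnit A.det := by
        rw [hA]
        exact (Matrix.isUnits_det_units M)
      exact this.ne_zero
    rw [Matrix.det_fin_two, hA00, hA11] at hdetM
    have hA01 : A 0 1 ≠ 0 := fun h => hdetM (by rw [h]; ring)
    have hA10 : A 1 0 ≠ 0 := fun h => hdetM (by rw [h]; ring)
    -- from q01 : A 0 1 * c = e * A 0 1  → c = e
    have hce : c = (e : ZMod p) := by
      have : A 0 1 * (c - (e:ZMod p)) = 0 := by linear_combination q01
      rcases mul_eq_zero.mp this with h | h
      · exact absurd h hA01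
      · linear_combination h
    have hec : (e : ZMod p) * c = 1 := by
      have : A 1 0 * ((e:ZMod p) * c - 1) = 0 := by linear_combination q10
      rcases mul_eq_zero.mp this with h | h
      · exact absurd h hA10
      · linear_combination h
    have he2 : e ^ 2 = 1 := by
      ext
      push_cast
      rw [pow_two]
      calc (e:ZMod p) * e = (e:ZMod p) * c := by rw [hce]
      _ = 1 := hec
    have hdvd := orderOf_dvd_of_pow_eq_one he2
    have := Nat.le_of_dvd two_pos hdvd
    omega
end
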